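/- arXiv:1109.4156 — 4 statements merged into one kernel-verified Lean document; each statement's English description precedes it below -/
import Mathlib

section
/- If v ∈ B_S(u), i.e., d_G(u,v) < d_G(u, p_S(u)) where p_S(u) is the vertex of S nearest to u, then every edge on a shortest path from u to v in G belongs to E_S, and hence d_{G_S}(u,v) = d_G(u,v). -/
/-- Shortest-path distance in a weighted graph: the infimum of the total edge
weight over all walks between the two vertices. -/
noncomputable def wdist {V : Type*} (G : SimpleGraph V) (w : Sym2 V → ℝ) (u v : V) : ℝ :=
  sInf {x : ℝ | ∃ p : G.Walk u v, x = (p.edges.map w).sum}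

/-- Let `G` be a connected undirected graph with positive edge
weights, `S` a nonempty vertex set with nearest-sample map `pS`, and `GS` the
subgraph `G_S` whose edges are those incident to some vertex `a` with weight
less than `d_G(a, pS a)`. If `d_G(u,v) < d_G(u, pS u)` (i.e. `v ∈ B_S(u)`),
then every edge on a shortest `u`-`v` path in `G` is an edge of `G_S`, and
hence `d_{G_S}(u,v) = d_G(u,v)`. -/
theorem stmt0 {V : Type*} [Fintype V] (G GS : SimpleGraph V) (w : Sym2 V → ℝ)
    (hG : G.Connected) (hw : ∀ e ∈ G.edgeSet, 0 < w e)
    (S : Set V) (hS : S.Nonempty)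
    (pS : V → V) (hpS : ∀ x, pS x ∈ S)
    (hpmin : ∀ x, ∀ s ∈ S, wdist G w x (pS x) ≤ wdist G w x s)
    (hGS : ∀ a b : V, GS.Adj a b ↔ G.Adj a b ∧
      (w s(a, b) < wdist G w a (pS a) ∨ w s(a, b) < wdist G w b (pS b)))
    (u v : V) (huv : wdist G w u v < wdist G w u (pS u)) :
    (∀ q : G.Walk u v, (q.edges.map w).sum = wdist G w u v →
      ∀ e ∈ q.edges, e ∈ GS.edgeSet) ∧
    wdist GS w u v = wdist G w u v := by
  classical
  have hsum : ∀ {a b : V} (p : G.Walk a b), 0 ≤ (p.edges.map w).sum := by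
    intro a b p
    apply List.sum_nonneg
    intro x hx
    obtain ⟨e, he, rfl⟩ := List.mem_map.mp hx
    exact le_of_lt (hw e (p.edges_subset_edgeSet he))
  have hbdd : ∀ a b : V, BddBelow {x : ℝ | ∃ p : G.Walk a b, x = (p.edges.map w).sum} := by
    intro a b
    exact ⟨0, fun x hx => by obtain ⟨p, rfl⟩ := hx; exact hsum p⟩
  have hne : ∀ a b : V, {x : ℝ | ∃ p : G.Walk a b, x = (p.edges.map w).sum}.Nonempty := by
    intro a b
    obtain ⟨p⟩ := hG.preconnected a b
    exact ⟨_, p, rfl⟩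
  have hle : ∀ {a b : V} (p : G.Walk a b), wdist G w a b ≤ (p.edges.map w).sum := by
    intro a b p
    exact csInf_le (hbdd a b) ⟨p, rfl⟩
  -- triangle inequality
  have htri : ∀ a b c : V, wdist G w a c ≤ wdist G w a b + wdist G w b c := by
    intro a b c
    have h1 : ∀ p2 : G.Walk b c, wdist G w a c ≤ wdist G w a b + (p2.edges.map w).sum := by
      intro p2
      have : wdist G w a c - (p2.edges.map w).sum ≤ wdist G w a b := by
        apply le_csInf (hne a b)
        rintro x ⟨p1, rfl⟩
        have := hle (p1.append p2)
        rw [SimpleGraph.Walk.edges_append, List.map_append, List.sum_append] at this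
        linarith
      linarith
    have h2 : wdist G w a c - wdist G w a b ≤ wdist G w b c := by
      apply le_csInf (hne b c)
      rintro x ⟨p2, rfl⟩
      have := h1 p2
      linarith
    linarith
  -- key lemma: every walk from u to anywhere with small total weight lies in GS
  have hD : ∀ {a : V} (p : G.Walk a v),
      wdist G w u a + (p.edges.map w).sum < wdist G w u (pS u) →
      ∀ e ∈ p.edges, e ∈ GS.edgeSet := by
    clear huv
    intro a p
    induction p with
    | nil => intro _ e he; simp at he
    | @cons a b c hab p ih =>
      intro hlt e he
      rw [SimpleGraph.Walk.edges_cons, List.map_cons, List.sum_cons] at hlt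
      have hab1 : wdist G w a b ≤ w s(a, b) := by
        have := hle (SimpleGraph.Walk.cons hab SimpleGraph.Walk.nil)
        simpa using this
      rw [SimpleGraph.Walk.edges_cons] at he
      rcases List.mem_cons.mp he with rfl | he'
      · rw [SimpleGraph.mem_edgeSet]
        rw [hGS a b]
        refine ⟨hab, Or.inl ?_⟩
        have t1 : wdist G w u (pS u) ≤ wdist G w u a + wdist G w a (pS a) :=
          le_trans (hpmin u (pS a) (hpS a)) (htri u a (pS a))
        have := hsum p
        linarith
      · refine ih ?_ e he'
        have t2 : wdist G w u b ≤ wdist G w u a + w s(a, b) :=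
          le_trans (htri u a b) (by linarith)
        linarith
  have huu : wdist G w u u ≤ 0 := by
    have := hle (SimpleGraph.Walk.nil : G.Walk u u)
    simpa using this
  -- part 1
  have part1 : ∀ q : G.Walk u v, (q.edges.map w).sum = wdist G w u v →
      ∀ e ∈ q.edges, e ∈ GS.edgeSet := by
    intro q hq
    apply hD q
    rw [hq]
    linarith
  refine ⟨part1, ?_⟩
  -- transfer walks with small weight into GS
  have htrans : ∀ (p : G.Walk u v),
      wdist G w u u + (p.edges.map w).sum < wdist G w u (pS u) →
      ∃ p' : GS.Walk u v, (p'.edges.map w).sum = (p.edges.map w).sum := by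
    intro p hp
    refine ⟨p.transfer GS (hD p hp), ?_⟩
    rw [SimpleGraph.Walk.edges_transfer]
  -- nonemptiness of the GS set
  obtain ⟨x0, ⟨p0, rfl⟩, hx0⟩ := exists_lt_of_csInf_lt (hne u v) huv
  obtain ⟨p0', hp0'⟩ := htrans p0 (by linarith)
  have hneGS : {x : ℝ | ∃ p : GS.Walk u v, x = (p.edges.map w).sum}.Nonempty :=
    ⟨_, p0', rfl⟩
  -- GS walks are G walks
  have hGSleG : GS.edgeSet ⊆ G.edgeSet := by
    intro e he
    induction e with
    | _ a b =>
      rw [SimpleGraph.mem_edgeSet] at he ⊢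
      exact ((hGS a b).mp he).1
  have hsub : {x : ℝ | ∃ p : GS.Walk u v, x = (p.edges.map w).sum} ⊆
      {x : ℝ | ∃ p : G.Walk u v, x = (p.edges.map w).sum} := by
    rintro x ⟨p, rfl⟩
    refine ⟨p.transfer G (fun e he => hGSleG (p.edges_subset_edgeSet he)), ?_⟩
    rw [SimpleGraph.Walk.edges_transfer]
  have hge : wdist G w u v ≤ wdist GS w u v := csInf_le_csInf (hbdd u v) hneGS hsub
  have hle2 : wdist GS w u v ≤ wdist G w u v := by
    apply le_of_forall_pos_le_add
    intro ε hε
    have hlt : wdist G w u v < min (wdist G w u v + ε) (wdist G w u (pS u)) :=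
      lt_min (by linarith) huv
    obtain ⟨x, ⟨p, rfl⟩, hx⟩ := exists_lt_of_csInf_lt (hne u v) hlt
    obtain ⟨p', hp'⟩ := htrans p (by
      have := lt_of_lt_of_le hx (min_le_right _ _)
      linarith)
    calc wdist GS w u v ≤ (p'.edges.map w).sum := csInf_le ⟨0, by
            rintro y ⟨q, rfl⟩
            apply List.sum_nonneg
            intro z hz
            obtain ⟨e, he, rfl⟩ := List.mem_map.mp hz
            exact le_of_lt (hw e (hGSleG (q.edges_subset_edgeSet he)))⟩ ⟨p', rfl⟩
      _ = (p.edges.map w).sum := hp'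
      _ ≤ wdist G w u v + ε := le_of_lt (lt_of_lt_of_le hx (min_le_left _ _))
  linarith
end

section
/- If S is obtained by including each vertex of V independently with probability p ∈ (0,1], then the expected number of edges in E_S is O(n/p); more precisely, the expected size of E_S(v) for each vertex v is at most 1/p, so E[|E_S|] ≤ n/p. -/
open MeasureTheory
open scoped ENNReal

/-- Let `G` be a connected graph on `n` vertices with positive edge
weights that are pairwise distinct among the edges incident to any fixed vertex.
Form a random subset `S ⊆ V` by including each vertex independently with
probability `p ∈ (0,1]` (product of Bernoulli measures on `V → Bool`). With
`d(v,S) = ⨅_{s ∈ S} d_G(v,s)` (interpreted in `ℝ≥0∞`, so `d(v,∅) = ∞`) and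
`E_S(v)` the set of edges incident to `v` of weight less than `d(v,S)`, the
expected size of each `E_S(v)` is at most `1/p`, and hence the expected size of
`E_S = ⋃_v E_S(v)` is at most `n/p`. -/
theorem stmt1 {V : Type*} [Fintype V] (G : SimpleGraph V) (w : Sym2 V → ℝ)
    (hG : G.Connected) (hw : ∀ e ∈ G.edgeSet, 0 < w e)
    (hdistinct : ∀ v : V, ∀ e₁ ∈ G.edgeSet, ∀ e₂ ∈ G.edgeSet,
      v ∈ e₁ → v ∈ e₂ → w e₁ = w e₂ → e₁ = e₂)
    (p : ℝ≥0∞) (hp0 : 0 < p) (hp1 : p ≤ 1)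
    (μ : Measure (V → Bool))
    (hμ : μ = Measure.pi fun _ : V => (PMF.bernoulli p.toNNReal (by simpa using ENNReal.toNNReal_mono ENNReal.one_ne_top hp1)).toMeasure)
    (dS : (V → Bool) → V → ℝ≥0∞)
    (hdS : ∀ ω v, dS ω v = ⨅ s : {s : V // ω s = true}, ENNReal.ofReal (wdist G w v s))
    (ES : V → (V → Bool) → Set (Sym2 V))
    (hES : ∀ v ω, ES v ω = {e ∈ G.edgeSet | v ∈ e ∧ ENNReal.ofReal (w e) < dS ω v}) :
    (∀ v : V, ∫⁻ ω, ((ES v ω).ncard : ℝ≥0∞) ∂μ ≤ 1 / p) ∧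
    ∫⁻ ω, (((⋃ v : V, ES v ω).ncard : ℝ≥0∞)) ∂μ ≤ (Fintype.card V : ℝ≥0∞) / p := by
  classical
  -- every subset of the finite space `V → Bool` is measurable
  have hms : ∀ s : Set (V → Bool), MeasurableSet s := by
    intro s
    have h1 : ∀ ω : V → Bool, MeasurableSet ({ω} : Set (V → Bool)) := by
      intro ω
      have : ({ω} : Set (V → Bool)) = Set.univ.pi (fun v => {ω v}) := by
        ext x; simp [funext_iff, Set.mem_pi]
      rw [this]
      exact MeasurableSet.univ_pi fun v => measurableSet_singleton _
    have hs : s = ⋃ ω ∈ s, {ω} := by simp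
    rw [hs]
    exact MeasurableSet.biUnion (Set.to_countable s) (fun ω _ => h1 ω)
  have hmeas : ∀ f : (V → Bool) → ℝ≥0∞, Measurable f := fun f t _ => hms _
  -- measure of the event "all vertices of T are unsampled"
  have key : ∀ T : Finset V,
      μ {ω : V → Bool | ∀ u ∈ T, ω u = false} = (1 - p) ^ T.card := by
    intro T
    have hset : {ω : V → Bool | ∀ u ∈ T, ω u = false}
        = Set.univ.pi (fun v => if v ∈ T then ({false} : Set Bool) else Set.univ) := by
      ext ω
      simp only [Set.mem_setOf_eq, Set.mem_pi, Set.mem_univ, forall_true_left]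
      constructor
      · intro h v
        by_cases hv : v ∈ T <;> simp [hv, h v]
      · intro h u hu
        have := h u
        simpa [hu] using this
    rw [hμ, hset, Measure.pi_pi]
    have hval : ∀ v : V, (PMF.bernoulli p.toNNReal (by simpa using ENNReal.toNNReal_mono ENNReal.one_ne_top hp1)).toMeasure
        (if v ∈ T then ({false} : Set Bool) else Set.univ)
        = if v ∈ T then 1 - p else 1 := by
      intro v
      by_cases hv : v ∈ T
      · simp only [hv, if_true]
        rw [PMF.toMeasure_apply_singleton _ _ (measurableSet_singleton _)]
        refine (PMF.bernoulli_apply _ false).trans ?_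
        simp [ENNReal.coe_sub, ENNReal.coe_toNNReal (ne_top_of_le_ne_top ENNReal.one_ne_top hp1)]
      · rw [if_neg hv, if_neg hv]; exact measure_univ
    simp only [hval]
    rw [← Finset.prod_filter]
    have hfil : Finset.univ.filter (fun x => x ∈ T) = T := by ext x; simp
    rw [hfil, Finset.prod_const]
  -- per-vertex bound
  have hv : ∀ v : V, ∫⁻ ω, ((ES v ω).ncard : ℝ≥0∞) ∂μ ≤ 1 / p := by
    intro v
    -- incident edges
    set Iv : Finset (Sym2 V) :=
      Finset.univ.filter (fun e => e ∈ G.edgeSet ∧ v ∈ e) with hIv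
    -- the other endpoint of an incident edge
    set oth : Sym2 V → V := fun e => if h : v ∈ e then Sym2.Mem.other h else v with hoth
    have hoth_spec : ∀ e ∈ Iv, s(v, oth e) = e := by
      intro e he
      rw [hIv, Finset.mem_filter] at he
      simp only [hoth, dif_pos he.2.2]
      exact Sym2.other_spec he.2.2
    have hoth_inj : ∀ e₁ ∈ Iv, ∀ e₂ ∈ Iv, oth e₁ = oth e₂ → e₁ = e₂ := by
      intro e₁ h₁ e₂ h₂ h
      rw [← hoth_spec e₁ h₁, ← hoth_spec e₂ h₂, h]
    -- downward set of incident edges and corresponding vertices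
    set Ne : Sym2 V → Finset (Sym2 V) := fun e => Iv.filter (fun e' => w e' ≤ w e) with hNe
    set T : Sym2 V → Finset V := fun e => (Ne e).image oth with hT
    have hTcard : ∀ e, (T e).card = (Ne e).card := by
      intro e
      apply Finset.card_image_of_injOn
      intro e₁ h₁ e₂ h₂ h
      exact hoth_inj e₁ (Finset.mem_of_mem_filter _ h₁) e₂ (Finset.mem_of_mem_filter _ h₂) h
    -- event inclusion
    have hincl : ∀ e ∈ Iv, {ω : V → Bool | e ∈ ES v ω}
        ⊆ {ω : V → Bool | ∀ u ∈ T e, ω u = false} := by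
      intro e he ω hω
      rw [Set.mem_setOf_eq, hES] at hω
      obtain ⟨heE, hvE, hlt⟩ := hω
      intro u hu
      rw [hT] at hu
      obtain ⟨e', he', hue⟩ := Finset.mem_image.mp hu
      have he'I : e' ∈ Iv := Finset.mem_of_mem_filter _ he'
      have hwe' : w e' ≤ w e := by
        rw [hNe, Finset.mem_filter] at he'; exact he'.2
      by_contra hcon
      have hu' : ω u = true := by
        cases h : ω u
        · exact absurd h hcon
        · rfl
      -- the single edge e' gives a walk from v to u
      have he'e : s(v, u) = e' := by rw [← hue]; exact hoth_spec e' he'I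
      have hadj : G.Adj v u := by
        rw [← SimpleGraph.mem_edgeSet, he'e]
        rw [hIv, Finset.mem_filter] at he'I
        exact he'I.2.1
      have hbdd : BddBelow {x : ℝ | ∃ q : G.Walk v u, x = (q.edges.map w).sum} := by
        refine ⟨0, ?_⟩
        rintro x ⟨q, rfl⟩
        apply List.sum_nonneg
        intro a ha
        obtain ⟨b, hb, rfl⟩ := List.mem_map.mp ha
        exact le_of_lt (hw b (q.edges_subset_edgeSet hb))
      have hmem' : w e' ∈ {x : ℝ | ∃ q : G.Walk v u, x = (q.edges.map w).sum} := by
        refine ⟨SimpleGraph.Walk.cons hadj SimpleGraph.Walk.nil, ?_⟩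
        simp [he'e]
      have hwalk : wdist G w v u ≤ w e' := csInf_le hbdd hmem'
      have hdle : dS ω v ≤ ENNReal.ofReal (wdist G w v u) := by
        rw [hdS]
        exact iInf_le (fun s : {s : V // ω s = true} => ENNReal.ofReal (wdist G w v s)) ⟨u, hu'⟩
      have : dS ω v ≤ ENNReal.ofReal (w e) :=
        hdle.trans ((ENNReal.ofReal_le_ofReal hwalk).trans (ENNReal.ofReal_le_ofReal hwe'))
      exact absurd hlt (not_lt.mpr this)
    -- injectivity of e ↦ (Ne e).card on Iv
    have hcard_inj : ∀ e₁ ∈ Iv, ∀ e₂ ∈ Iv, (Ne e₁).card = (Ne e₂).card → e₁ = e₂ := by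
      intro e₁ h₁ e₂ h₂ hcard
      by_contra hne
      have hmem : ∀ e ∈ Iv, e ∈ G.edgeSet ∧ v ∈ e := by
        intro e he; rw [hIv, Finset.mem_filter] at he; exact he.2
      have hwne : w e₁ ≠ w e₂ := fun h =>
        hne (hdistinct v e₁ (hmem e₁ h₁).1 e₂ (hmem e₂ h₂).1 (hmem e₁ h₁).2 (hmem e₂ h₂).2 h)
      have hlt : ∀ a ∈ Iv, ∀ b ∈ Iv, w a < w b → (Ne a).card < (Ne b).card := by
        intro a ha b hb hab
        apply Finset.card_lt_card
        rw [Finset.ssubset_iff_of_subset]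
        · exact ⟨b, by simp [hNe, Finset.mem_filter, hb, le_refl], by
            simp [hNe, Finset.mem_filter, not_le.mpr hab]⟩
        · intro x hx
          rw [hNe, Finset.mem_filter] at hx ⊢
          exact ⟨hx.1, hx.2.trans (le_of_lt hab)⟩
      rcases lt_or_gt_of_ne hwne with h | h
      · exact absurd hcard (ne_of_lt (hlt e₁ h₁ e₂ h₂ h))
      · exact absurd hcard.symm (ne_of_lt (hlt e₂ h₂ e₁ h₁ h))
    -- express ncard as a sum of indicators
    have hESfin : ∀ ω, ES v ω = ↑(Iv.filter (fun e => e ∈ ES v ω)) := by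
      intro ω
      ext e
      simp only [Finset.coe_filter, Set.mem_setOf_eq, hIv, Finset.mem_filter, Finset.mem_univ,
        true_and]
      constructor
      · intro he
        have he' := he
        rw [hES] at he'
        exact ⟨⟨he'.1, he'.2.1⟩, he⟩
      · exact fun h => h.2
    calc ∫⁻ ω, ((ES v ω).ncard : ℝ≥0∞) ∂μ
        = ∫⁻ ω, ∑ e ∈ Iv, ({ω' : V → Bool | e ∈ ES v ω'}.indicator 1 ω) ∂μ := by
          congr 1
          ext ω
          rw [hESfin ω, Set.ncard_coe_finset, Finset.card_filter]
          push_cast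
          apply Finset.sum_congr rfl
          intro e _
          simp [Set.indicator_apply]
      _ = ∑ e ∈ Iv, ∫⁻ ω, ({ω' : V → Bool | e ∈ ES v ω'}.indicator 1 ω) ∂μ := by
          apply lintegral_finset_sum
          intro e _
          exact hmeas _
      _ = ∑ e ∈ Iv, μ {ω' : V → Bool | e ∈ ES v ω'} := by
          apply Finset.sum_congr rfl
          intro e _
          exact lintegral_indicator_one (hms _)
      _ ≤ ∑ e ∈ Iv, (1 - p) ^ (Ne e).card := by
          apply Finset.sum_le_sum
          intro e he
          calc μ {ω' : V → Bool | e ∈ ES v ω'}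
              ≤ μ {ω : V → Bool | ∀ u ∈ T e, ω u = false} := measure_mono (hincl e he)
            _ = (1 - p) ^ (T e).card := key (T e)
            _ = (1 - p) ^ (Ne e).card := by rw [hTcard e]
      _ = ∑ n ∈ Iv.image (fun e => (Ne e).card), (1 - p) ^ n := by
          rw [Finset.sum_image hcard_inj]
      _ ≤ ∑' n : ℕ, (1 - p) ^ n := ENNReal.sum_le_tsum _
      _ = (1 - (1 - p))⁻¹ := ENNReal.tsum_geometric _
      _ = 1 / p := by rw [ENNReal.sub_sub_cancel ENNReal.one_ne_top hp1, one_div]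
  refine ⟨hv, ?_⟩
  -- union bound
  have hub : ∀ ω : V → Bool,
      (((⋃ v : V, ES v ω).ncard : ℝ≥0∞)) ≤ ∑ v : V, ((ES v ω).ncard : ℝ≥0∞) := by
    intro ω
    have hfin : ∀ v, (ES v ω).Finite := fun v => Set.toFinite _
    have hU : (⋃ v : V, ES v ω) = ↑(Finset.univ.biUnion fun v => (hfin v).toFinset) := by
      ext e
      simp only [Set.mem_iUnion, Finset.coe_biUnion, Finset.mem_coe, Finset.mem_univ,
        Set.mem_iUnion, Set.Finite.mem_toFinset, Set.iUnion_true, true_and]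
    rw [hU, Set.ncard_coe_finset]
    calc ((Finset.univ.biUnion fun v => (hfin v).toFinset).card : ℝ≥0∞)
        ≤ ((∑ v : V, ((hfin v).toFinset).card : ℕ) : ℝ≥0∞) := by
          exact_mod_cast Finset.card_biUnion_le
      _ = ∑ v : V, ((ES v ω).ncard : ℝ≥0∞) := by
          push_cast
          apply Finset.sum_congr rfl
          intro v _
          rw [Set.ncard_eq_toFinset_card _ (hfin v), Set.Finite.card_toFinset]
  calc ∫⁻ ω, (((⋃ v : V, ES v ω).ncard : ℝ≥0∞)) ∂μ
      ≤ ∫⁻ ω, ∑ v : V, ((ES v ω).ncard : ℝ≥0∞) ∂μ := lintegral_mono hub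
    _ = ∑ v : V, ∫⁻ ω, ((ES v ω).ncard : ℝ≥0∞) ∂μ :=
        lintegral_finset_sum _ (fun v _ => hmeas _)
    _ ≤ ∑ _v : V, 1 / p := Finset.sum_le_sum (fun v _ => hv v)
    _ = (Fintype.card V : ℝ≥0∞) / p := by
        simp [Finset.sum_const, Finset.card_univ, div_eq_mul_inv, mul_comm]
end

section
/- For any metric d on V, nonempty S ⊆ V with nearest-sample map p, vertices u,v with d(u,p(u)) ≤ d(u,v) and d(v,p(v)) ≤ d(u,v), and a function d' satisfying d(x,y) ≤ d'(x,y) ≤ δ·d(x,y) for all x,y (with δ ≥ 1), the estimate D = d(u,p(u)) + d'(p(u),p(v)) + d(v,p(v)) satisfies d(u,v) ≤ D ≤ (3δ+2)·d(u,v). -/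
/-- For a metric `dist`, nonempty `S` with nearest-sample map `p`,
vertices `u, v` with `dist u (p u) ≤ dist u v` and `dist v (p v) ≤ dist u v`,
and a function `d'` with `dist x y ≤ d' x y ≤ δ · dist x y` for all `x, y`
(where `δ ≥ 1`), the estimate `D = dist u (p u) + d' (p u) (p v) + dist v (p v)`
satisfies `dist u v ≤ D ≤ (3δ+2)·dist u v`. -/
theorem stmt3 {V : Type*} [MetricSpace V] (S : Set V) (hS : S.Nonempty)
    (p : V → V) (hpS : ∀ u, p u ∈ S)
    (hpmin : ∀ u, ∀ s ∈ S, dist u (p u) ≤ dist u s)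
    (δ : ℝ) (hδ : 1 ≤ δ)
    (d' : V → V → ℝ)
    (hd'lb : ∀ x y, dist x y ≤ d' x y)
    (hd'ub : ∀ x y, d' x y ≤ δ * dist x y)
    (u v : V) (hu : dist u (p u) ≤ dist u v) (hv : dist v (p v) ≤ dist u v) :
    dist u v ≤ dist u (p u) + d' (p u) (p v) + dist v (p v) ∧
      dist u (p u) + d' (p u) (p v) + dist v (p v) ≤ (3 * δ + 2) * dist u v := by
  have t1 : dist u v ≤ dist u (p u) + dist (p u) (p v) + dist (p v) v := dist_triangle4 u (p u) (p v) v
  have t2 : dist (p u) (p v) ≤ dist (p u) u + dist u v + dist v (p v) := dist_triangle4 (p u) u v (p v)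
  have h1 := hd'lb (p u) (p v)
  have h2 := hd'ub (p u) (p v)
  have h3 : dist (p v) v = dist v (p v) := dist_comm _ _
  have h4 : dist (p u) u = dist u (p u) := dist_comm _ _
  have h5 : (0:ℝ) ≤ dist (p u) (p v) := dist_nonneg
  constructor
  · linarith
  · nlinarith
end

section
/- Let k ≥ 1 and c = 9 + 3√13, and suppose c/√k ≤ 1. If κ = ⌈k/(i+1)⌉ satisfies 2√k/c ≤ k/(i+1) ≤ κ ≤ c√k/18, and k' = ⌊(k + 3(κ-1))/(6κ-3)⌋, then k' ≥ 2√k/c. -/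
/-- Let `k ≥ 1`, `c = 9 + 3√13` with `c/√k ≤ 1`. If
`κ = ⌈k/(i+1)⌉` satisfies `2√k/c ≤ k/(i+1) ≤ κ ≤ c√k/18` and
`k' = ⌊(k + 3(κ-1))/(6κ-3)⌋`, then `k' ≥ 2√k/c`. -/
theorem stmt8 (k i : ℝ) (hk : 1 ≤ k) (c : ℝ) (hc : c = 9 + 3 * Real.sqrt 13)
    (hck : c / Real.sqrt k ≤ 1)
    (κ : ℤ) (hκ : κ = ⌈k / (i + 1)⌉)
    (h1 : 2 * Real.sqrt k / c ≤ k / (i + 1))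
    (h2 : k / (i + 1) ≤ (κ : ℝ))
    (h3 : (κ : ℝ) ≤ c * Real.sqrt k / 18)
    (k' : ℤ) (hk' : k' = ⌊(k + 3 * ((κ : ℝ) - 1)) / (6 * (κ : ℝ) - 3)⌋) :
    2 * Real.sqrt k / c ≤ (k' : ℝ) := by
  have hs0 : 0 < Real.sqrt k := Real.sqrt_pos.2 (by linarith)
  set s := Real.sqrt k with hsdef
  have hs2 : s ^ 2 = k := Real.sq_sqrt (by linarith)
  have hcpos : 0 < c := by
    have := Real.sqrt_nonneg 13; rw [hc]; linarith
  have hcs : c ≤ s := (div_le_one hs0).1 hck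
  have hκ1 : (1:ℝ) ≤ (κ:ℝ) := by
    have hpos : 0 < k / (i+1) := lt_of_lt_of_le (by positivity) h1
    have h0 : 0 < κ := by rw [hκ]; exact Int.ceil_pos.2 hpos
    exact_mod_cast h0
  have hden : (0:ℝ) < 6 * (κ:ℝ) - 3 := by linarith
  have hfloor : (k + 3*((κ:ℝ)-1)) / (6*(κ:ℝ)-3) - 1 < (k':ℝ) := by
    rw [hk']; exact Int.sub_one_lt_floor _
  have ht : 2 * s / c * c = 2 * s := div_mul_cancel₀ _ hcpos.ne'
  have key : 2 * s / c + 1 ≤ (k + 3*((κ:ℝ)-1)) / (6*(κ:ℝ)-3) := by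
    rw [le_div_iff₀ hden]
    nlinarith [mul_le_mul_of_nonneg_left h3 hs0.le,
      mul_le_mul_of_nonneg_left h3 hcpos.le,
      mul_le_mul_of_nonneg_right hcs (mul_pos hcpos hs0).le,
      mul_pos hcpos hs0, hs2, ht]
  linarith
end
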